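/- arXiv:1805.10509 — 7 statements merged into one kernel-verified Lean document; each statement's English description precedes it below -/
import Mathlib

section
/- Every completely regular space X admits a base satisfying Frink's conditions: the cozero sets of continuous functions X → [0,1] form a base B such that (1) for every open U and x ∈ U there exists V ∈ B with x ∈ X \ V ⊆ U, and (2) for all U, V ∈ B with U ∪ V = X there exist U*, V* ∈ B with X \ V ⊆ U* ⊆ X \ V* ⊆ U. -/
/-- The family of cozero sets of continuous functions `X → [0,1]`. -/
def cozeroSets (X : Type*) [TopologicalSpace X] : Set (Set X) :=
  {s | ∃ f : X → ℝ, Continuous f ∧ (∀ x, f x ∈ Set.Icc (0 : ℝ) 1) ∧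
    s = f ⁻¹' Set.Ioc (0 : ℝ) 1}

/-!
Clamping a real function to `[0,1]` does not change where it is positive, so the cozero sets
are exactly the sets `{x | 0 < f x}` for arbitrary continuous `f : X → ℝ`; in this form
complete regularity produces them directly. For Frink's condition (2), if `{0 < f}` and
`{0 < g}` cover `X`, then `{0 < f - g}` and `{0 < g - f}` are the sets interpolating between
`{0 < g}ᶜ` and `{0 < f}`: no normalisation of `f` and `g` is needed.
-/

open Set

section

variable {X : Type*} [TopologicalSpace X]

theorem mem_cozeroSets_iff {s : Set X} :
    s ∈ cozeroSets X ↔ ∃ f : X → ℝ, Continuous f ∧ s = {x | 0 < f x} := by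
  constructor
  · rintro ⟨f, hf, hf01, rfl⟩
    refine ⟨f, hf, ext fun x => ?_⟩
    simp [(hf01 x).2]
  · rintro ⟨f, hf, rfl⟩
    refine ⟨fun x => max 0 (min 1 (f x)), by fun_prop, fun x => ?_, ext fun x => ?_⟩
    · exact ⟨le_max_left _ _, max_le zero_le_one (min_le_left _ _)⟩
    · simp

theorem setOf_pos_mem_cozeroSets {f : X → ℝ} (hf : Continuous f) :
    {x | 0 < f x} ∈ cozeroSets X :=
  mem_cozeroSets_iff.2 ⟨f, hf, rfl⟩

theorem isOpen_of_mem_cozeroSets {s : Set X} (hs : s ∈ cozeroSets X) : IsOpen s := by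
  obtain ⟨f, hf, rfl⟩ := mem_cozeroSets_iff.1 hs
  exact isOpen_lt continuous_const hf

theorem exists_continuous_eq_zero_eqOn_one [CompletelyRegularSpace X] {U : Set X}
    (hU : IsOpen U) {x : X} (hx : x ∈ U) :
    ∃ f : X → ℝ, Continuous f ∧ f x = 0 ∧ EqOn f 1 Uᶜ := by
  obtain ⟨f, hf, hfx, hfU⟩ :=
    CompletelyRegularSpace.completely_regular x Uᶜ hU.isClosed_compl (not_not_intro hx)
  exact ⟨fun y => f y, by fun_prop, by simp [hfx], fun y hy => by simp [hfU hy]⟩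

theorem exists_mem_cozeroSets_compl_subset [CompletelyRegularSpace X] {U : Set X}
    (hU : IsOpen U) {x : X} (hx : x ∈ U) :
    ∃ V ∈ cozeroSets X, x ∈ Vᶜ ∧ Vᶜ ⊆ U := by
  obtain ⟨f, hf, hfx, hfU⟩ := exists_continuous_eq_zero_eqOn_one hU hx
  refine ⟨{y | 0 < f y}, setOf_pos_mem_cozeroSets hf, by simp [hfx], fun y hy => ?_⟩
  by_contra hyU
  simp [hfU hyU] at hy

theorem isTopologicalBasis_cozeroSets [CompletelyRegularSpace X] :
    TopologicalSpace.IsTopologicalBasis (cozeroSets X) := by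
  refine TopologicalSpace.isTopologicalBasis_of_isOpen_of_nhds
    (fun _ => isOpen_of_mem_cozeroSets) fun x U hx hU => ?_
  obtain ⟨f, hf, hfx, hfU⟩ := exists_continuous_eq_zero_eqOn_one hU hx
  refine ⟨{y | 0 < 1 - f y}, setOf_pos_mem_cozeroSets (by fun_prop), by simp [hfx],
    fun y hy => ?_⟩
  by_contra hyU
  simp [hfU hyU] at hy

theorem exists_mem_cozeroSets_between_of_union_eq_univ {U V : Set X}
    (hU : U ∈ cozeroSets X) (hV : V ∈ cozeroSets X) (hUV : U ∪ V = univ) :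
    ∃ U' ∈ cozeroSets X, ∃ V' ∈ cozeroSets X, Vᶜ ⊆ U' ∧ U' ⊆ V'ᶜ ∧ V'ᶜ ⊆ U := by
  obtain ⟨f, hf, rfl⟩ := mem_cozeroSets_iff.1 hU
  obtain ⟨g, hg, rfl⟩ := mem_cozeroSets_iff.1 hV
  have hcover : ∀ x, 0 < f x ∨ 0 < g x := fun x => eq_univ_iff_forall.1 hUV x
  refine ⟨{x | 0 < f x - g x}, setOf_pos_mem_cozeroSets (hf.sub hg),
    {x | 0 < g x - f x}, setOf_pos_mem_cozeroSets (hg.sub hf), fun x hx => ?_,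
    fun x hx => ?_, fun x hx => ?_⟩ <;>
  simp only [mem_compl_iff, mem_ofPred_eq, not_lt] at hx ⊢ <;>
  rcases hcover x with h | h <;> linarith
end

theorem frink_necessary_general {X : Type*} [TopologicalSpace X]
    [CompletelyRegularSpace X] :
    TopologicalSpace.IsTopologicalBasis (cozeroSets X) ∧
    (∀ U : Set X, IsOpen U → ∀ x ∈ U, ∃ V ∈ cozeroSets X, x ∈ Vᶜ ∧ Vᶜ ⊆ U) ∧
    (∀ U ∈ cozeroSets X, ∀ V ∈ cozeroSets X, U ∪ V = Set.univ →
      ∃ U' ∈ cozeroSets X, ∃ V' ∈ cozeroSets X, Vᶜ ⊆ U' ∧ U' ⊆ V'ᶜ ∧ V'ᶜ ⊆ U) :=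
  ⟨isTopologicalBasis_cozeroSets, fun _ hU _ hx => exists_mem_cozeroSets_compl_subset hU hx,
    fun _ hU _ hV hUV => exists_mem_cozeroSets_between_of_union_eq_univ hU hV hUV⟩

/-- Frink's characterization (necessity): in a completely regular T1 space the cozero
sets form a base satisfying Frink's conditions (1) and (2). -/
theorem frink_necessary {X : Type*} [TopologicalSpace X] [T1Space X]
    [CompletelyRegularSpace X] :
    TopologicalSpace.IsTopologicalBasis (cozeroSets X) ∧
    (∀ U : Set X, IsOpen U → ∀ x ∈ U, ∃ V ∈ cozeroSets X, x ∈ Vᶜ ∧ Vᶜ ⊆ U) ∧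
    (∀ U ∈ cozeroSets X, ∀ V ∈ cozeroSets X, U ∪ V = Set.univ →
      ∃ U' ∈ cozeroSets X, ∃ V' ∈ cozeroSets X, Vᶜ ⊆ U' ∧ U' ⊆ V'ᶜ ∧ V'ᶜ ⊆ U) :=
  frink_necessary_general
end

section
/- Every regular T1 one-point extension of an rc-space is completely regular. -/
/-!
Call a space mildly normal if any two disjoint regular closed sets have disjoint open
neighbourhoods. If `Y ∖ {p}` is mildly normal, so is `Y`: for disjoint regular closed `F`, `G`
with `p ∉ G`, remove from `F` a closed neighbourhood `t` of `p` that is separated from `G`. The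
rest, `closure (interior F \ t)`, is regular closed and misses `p`, so it is separated from `G`
inside the open subspace `Y ∖ {p}`.

Urysohn's construction then goes through in a mildly normal space with regular closed sets and
regular open neighbourhoods in place of closed sets and open neighbourhoods. In a regular space a
point and a closed set missing it have open neighbourhoods with disjoint closures, and closures of
open sets are regular closed, so the space is completely regular.
-/

open Set Topology

def IsRegularClosed {X : Type*} [TopologicalSpace X] (s : Set X) : Prop :=
  s = closure (interior s)

def IsMildlyNormal (X : Type*) [TopologicalSpace X] : Prop :=
  ∀ F G : Set X, IsRegularClosed F → IsRegularClosed G → Disjoint F G → SeparatedNhds F G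

section

variable {X Y : Type*} [TopologicalSpace X] [TopologicalSpace Y]

theorem IsRegularClosed.closure_interior_eq {s : Set X} (hs : IsRegularClosed s) :
    closure (interior s) = s :=
  hs.symm

theorem IsRegularClosed.isClosed {s : Set X} (hs : IsRegularClosed s) : IsClosed s :=
  hs.closure_interior_eq ▸ isClosed_closure

theorem IsOpen.isRegularClosed_closure {u : Set X} (hu : IsOpen u) :
    IsRegularClosed (closure u) :=
  (closure_mono hu.subset_interior_closure).antisymm isClosed_closure.closure_interior_subset

theorem IsRegularClosed.preimage {f : X → Y} (hf : Continuous f) (hf' : IsOpenMap f) {s : Set Y}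
    (hs : IsRegularClosed s) : IsRegularClosed (f ⁻¹' s) := by
  rw [IsRegularClosed, ← hf'.preimage_interior_eq_interior_preimage hf,
    ← hf'.preimage_closure_eq_closure_preimage hf, ← hs]

theorem closure_interior_subset_closure_interior_diff_union {s t : Set X} (ht : IsClosed t) :
    closure (interior s) ⊆ closure (interior s \ t) ∪ t := by
  intro y hy
  by_cases hyt : y ∈ t
  · exact Or.inr hyt
  · left
    rw [sdiff_eq, inter_comm]
    exact ht.isOpen_compl.inter_closure ⟨hyt, hy⟩

theorem SeparatedNhds.image {f : X → Y} (hf : IsOpenMap f) (hinj : Function.Injective f)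
    {s t : Set X} (h : SeparatedNhds s t) : SeparatedNhds (f '' s) (f '' t) := by
  obtain ⟨U, V, hU, hV, hsU, htV, hUV⟩ := h
  exact ⟨f '' U, f '' V, hf U hU, hf V hV, image_mono hsU, image_mono htV,
    (disjoint_image_iff hinj).2 hUV⟩

end

namespace IsMildlyNormal

variable {X : Type*} [TopologicalSpace X]

theorem separatedNhds_of_subset_isOpen {S : Set X} (hS : IsOpen S) (h : IsMildlyNormal S)
    {F G : Set X} (hF : IsRegularClosed F) (hG : IsRegularClosed G) (hFS : F ⊆ S) (hGS : G ⊆ S)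
    (hd : Disjoint F G) : SeparatedNhds F G := by
  have hval := hS.isOpenMap_subtype_val
  have hsep := (h _ _ (hF.preimage continuous_subtype_val hval)
    (hG.preimage continuous_subtype_val hval) (hd.preimage _)).image hval Subtype.val_injective
  rwa [Subtype.image_preimage_coe, Subtype.image_preimage_coe, inter_eq_right.2 hFS,
    inter_eq_right.2 hGS] at hsep

theorem separatedNhds_of_notMem_right [T1Space X] [RegularSpace X] {p : X}
    (h : IsMildlyNormal {x : X // x ≠ p}) {F G : Set X} (hF : IsRegularClosed F)
    (hG : IsRegularClosed G) (hpG : p ∉ G) (hd : Disjoint F G) : SeparatedNhds F G := by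
  obtain ⟨U, V, hU, hV, hpU, hGV, hUV⟩ :=
    SeparatedNhds.of_isCompact_isClosed isCompact_singleton hG.isClosed
      (disjoint_singleton_left.2 hpG)
  obtain ⟨t, ht, htc, htU⟩ := exists_mem_nhds_isClosed_subset (hU.mem_nhds (hpU rfl))
  set F₀ := closure (interior F \ t)
  have hF₀ : IsRegularClosed F₀ := (isOpen_interior.sdiff htc).isRegularClosed_closure
  have hF₀F : F₀ ⊆ F := (closure_mono sdiff_subset).trans hF.closure_interior_eq.subset
  have hpF₀ : p ∉ F₀ := by
    have : F₀ ⊆ (interior t)ᶜ := by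
      rw [← closure_compl]
      exact closure_mono fun _ hy => hy.2
    exact fun hp => this hp (mem_interior_iff_mem_nhds.2 ht)
  have hF₀G : SeparatedNhds F₀ G :=
    separatedNhds_of_subset_isOpen isOpen_ne h hF₀ hG (fun _ hy hyp => hpF₀ (hyp ▸ hy))
      (fun _ hy hyp => hpG (hyp ▸ hy)) (hd.mono_left hF₀F)
  have htG : SeparatedNhds t G := ⟨U, V, hU, hV, htU, hGV, hUV⟩
  have hFt : F ⊆ F₀ ∪ t :=
    hF.closure_interior_eq.superset.trans (closure_interior_subset_closure_interior_diff_union htc)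
  exact (hF₀G.union_left htG).mono hFt subset_rfl

theorem of_compl_singleton [T1Space X] [RegularSpace X] (p : X)
    (h : IsMildlyNormal {x : X // x ≠ p}) : IsMildlyNormal X := by
  intro F G hF hG hd
  by_cases hpG : p ∈ G
  · exact (separatedNhds_of_notMem_right h hG hF (disjoint_left.1 hd.symm hpG) hd.symm).symm
  · exact separatedNhds_of_notMem_right h hF hG hpG hd

theorem exists_isOpen_closure_subset (h : IsMildlyNormal X) {F u : Set X}
    (hF : IsRegularClosed F) (hu : IsRegularClosed uᶜ) (hFu : F ⊆ u) :
    ∃ v, IsOpen v ∧ F ⊆ v ∧ closure v ⊆ u := by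
  obtain ⟨U, V, hU, hV, hFU, huV, hUV⟩ := h F uᶜ hF hu (disjoint_compl_right.mono_left hFu)
  obtain ⟨v, W, hv, hW, hFv, hVW, hvW⟩ := h F (closure V) hF hV.isRegularClosed_closure
    ((hUV.closure_right hU).mono_left hFU)
  exact ⟨v, hv, hFv, (hvW.closure_left hW).subset_compl_right.trans
    (compl_subset_comm.1 (huV.trans (subset_closure.trans hVW)))⟩

theorem exists_continuous_zero_one (h : IsMildlyNormal X) {F G : Set X}
    (hF : IsRegularClosed F) (hG : IsRegularClosed G) (hd : Disjoint F G) :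
    ∃ f : C(X, ℝ), EqOn f 0 F ∧ EqOn f 1 G ∧ ∀ x, f x ∈ Icc (0 : ℝ) 1 := by
  let c : Urysohns.CU fun C U : Set X => IsRegularClosed C ∧ IsRegularClosed Uᶜ :=
  { C := F
    U := Gᶜ
    P_C_U := ⟨hF, by rwa [compl_compl]⟩
    closed_C := hF.isClosed
    open_U := hG.isClosed.isOpen_compl
    subset := disjoint_left.1 hd
    hP := by
      rintro C u - ⟨hC, hu⟩ - hCu
      obtain ⟨v, hv, hCv, hvu⟩ := h.exists_isOpen_closure_subset hC hu hCu
      have hcl : closure (interior (closure v)) = closure v :=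
        hv.isRegularClosed_closure.closure_interior_eq
      refine ⟨interior (closure v), isOpen_interior, hCv.trans hv.subset_interior_closure,
        hcl.trans_subset hvu, ⟨hC, ?_⟩, ⟨isOpen_interior.isRegularClosed_closure, hu⟩⟩
      rw [← closure_compl]
      exact isClosed_closure.isOpen_compl.isRegularClosed_closure }
  exact ⟨⟨c.lim, c.continuous_lim⟩, c.lim_of_mem_C,
    fun x hx => c.lim_of_notMem_U _ fun hxG => hxG hx, c.lim_mem_Icc⟩

theorem completelyRegularSpace [RegularSpace X] (h : IsMildlyNormal X) :
    CompletelyRegularSpace X := by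
  refine ⟨fun x K hK hxK => ?_⟩
  obtain ⟨U, V, hU, hV, hxU, hKV, hUV⟩ :=
    SeparatedNhds.of_isCompact_isClosed isCompact_singleton hK (disjoint_singleton_left.2 hxK)
  obtain ⟨t, ht, htc, htU⟩ := exists_mem_nhds_isClosed_subset (hU.mem_nhds (hxU rfl))
  have hd : Disjoint (closure (interior t)) (closure V) :=
    (hUV.closure_right hU).mono_left ((closure_minimal interior_subset htc).trans htU)
  obtain ⟨f, hfx, hfK, hf01⟩ := h.exists_continuous_zero_one
    isOpen_interior.isRegularClosed_closure hV.isRegularClosed_closure hd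
  exact ⟨fun y => ⟨f y, hf01 y⟩, f.continuous.subtype_mk hf01,
    Subtype.ext (hfx (subset_closure (mem_interior_iff_mem_nhds.2 ht))),
    fun y hy => Subtype.ext (hfK (subset_closure (hKV hy)))⟩

end IsMildlyNormal

/-- Every regular T1 one-point extension of an rc-space is completely regular:
if `Y` is a regular T1 space, `p ∈ Y`, and the subspace `Y \ {p}` is an rc-space
(any two disjoint regular closed subsets have disjoint open neighbourhoods),
then `Y` is completely regular. -/
theorem one_point_extension_of_rc_completely_regular {Y : Type*} [TopologicalSpace Y]
    [T1Space Y] [RegularSpace Y] (p : Y)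
    (hrc : ∀ F G : Set {y : Y // y ≠ p},
      F = closure (interior F) → G = closure (interior G) → Disjoint F G →
      ∃ U V : Set {y : Y // y ≠ p},
        IsOpen U ∧ IsOpen V ∧ F ⊆ U ∧ G ⊆ V ∧ Disjoint U V) :
    CompletelyRegularSpace Y :=
  (IsMildlyNormal.of_compl_singleton p hrc).completelyRegularSpace
end

section
/- Let F and G be disjoint closed subsets of the Niemytzki plane with G regular closed, let 0 < ε < 1 and α > 0. Then the closure, in the Niemytzki topology, of the union of the basic neighbourhoods K(p, εα) over all p ∈ F_α = {p ∈ F : K(p, α) ∩ G = ∅} is disjoint from G. -/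
open Set Metric

/-- Basic Niemytzki neighbourhood: for a point on the axis, the point together with the
open disc tangent to the axis at that point; for a point above the axis, the open disc
intersected with the closed half-plane. -/
noncomputable def NK (p : ℝ × ℝ) (α : ℝ) : Set (ℝ × ℝ) :=
  if p.2 = 0 then insert p (Metric.ball (p.1, α) α)
  else Metric.ball p α ∩ {q : ℝ × ℝ | 0 ≤ q.2}

/-- The underlying set of the Niemytzki plane: the closed upper half-plane. -/
abbrev NPoint : Type := {p : ℝ × ℝ // 0 ≤ p.2}

/-- The Niemytzki (tangent disc) topology on the closed upper half-plane. -/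
noncomputable def niem : TopologicalSpace NPoint :=
  TopologicalSpace.generateFrom
    {s : Set NPoint | ∃ (q : NPoint) (α : ℝ), 0 < α ∧ s = Subtype.val ⁻¹' NK q.val α}

/-! Near a point `q` of `G`, regular closedness provides a point `g ∈ G` strictly above the
axis, and the definition of the closure provides a point `w ∈ K(p, εα)` with `p ∈ F_α`.
Both lie in `K(q, β)`, so `dist g w < 4β`; for `4β = (1 - ε)α` this forces `g ∈ K(p, α)`,
contradicting `K(p, α) ∩ G = ∅`. The point `g` must lie above the axis because `K(p, α)`
contains no axis point other than `p`. Since `ℝ × ℝ` carries the sup metric, the "discs"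
are squares; only the triangle inequality and coordinate bounds are used. -/

lemma Dense.subset_closure_inter_of_eq_closure_interior {X : Type*} [TopologicalSpace X]
    {D G : Set X} (hD : Dense D) (hG : G = closure (interior G)) :
    G ⊆ closure (G ∩ D) :=
  calc G = closure (interior G) := hG
    _ ⊆ closure (closure (interior G ∩ D)) :=
      closure_mono (hD.open_subset_closure_inter isOpen_interior)
    _ ⊆ closure (G ∩ D) := by
      rw [closure_closure]
      exact closure_mono (inter_subset_inter_left _ interior_subset)

lemma Prod.mem_ball_iff_abs {x c : ℝ × ℝ} {β : ℝ} :
    x ∈ ball c β ↔ |x.1 - c.1| < β ∧ |x.2 - c.2| < β := by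
  rw [mem_ball, Prod.dist_eq, max_lt_iff, Real.dist_eq, Real.dist_eq]

lemma mem_ball_tangent_iff {x : ℝ × ℝ} {a β : ℝ} :
    x ∈ ball (a, β) β ↔ |x.1 - a| < β ∧ 0 < x.2 ∧ x.2 < 2 * β := by
  rw [Prod.mem_ball_iff_abs, abs_sub_lt_iff (a := x.2)]
  constructor
  · rintro ⟨h1, h2, h3⟩
    exact ⟨h1, by linarith, by linarith⟩
  · rintro ⟨h1, h2, h3⟩
    exact ⟨h1, by linarith, by linarith⟩

namespace NK

variable {p x w g : ℝ × ℝ} {β γ r s : ℝ}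

lemma eq_of_snd_eq_zero (hp : p.2 = 0) (β : ℝ) : NK p β = insert p (ball (p.1, β) β) :=
  if_pos hp

lemma eq_of_snd_ne_zero (hp : p.2 ≠ 0) (β : ℝ) : NK p β = ball p β ∩ {q | 0 ≤ q.2} :=
  if_neg hp

lemma mem_self (hp : 0 ≤ p.2) (hβ : 0 < β) : p ∈ NK p β := by
  by_cases hp0 : p.2 = 0
  · rw [eq_of_snd_eq_zero hp0]
    exact mem_insert _ _
  · rw [eq_of_snd_ne_zero hp0]
    exact ⟨mem_ball_self hβ, hp⟩

lemma mono (h : β ≤ γ) : NK p β ⊆ NK p γ := by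
  by_cases hp : p.2 = 0
  · rw [eq_of_snd_eq_zero hp, eq_of_snd_eq_zero hp]
    refine insert_subset_insert fun x hx => ?_
    obtain ⟨h1, h2, h3⟩ := mem_ball_tangent_iff.1 hx
    exact mem_ball_tangent_iff.2 ⟨h1.trans_le h, h2, by linarith⟩
  · rw [eq_of_snd_ne_zero hp, eq_of_snd_ne_zero hp]
    exact inter_subset_inter_left _ (ball_subset_ball h)

lemma subset_ball (hβ : 0 < β) : NK p β ⊆ ball p (2 * β) := by
  by_cases hp : p.2 = 0
  · rw [eq_of_snd_eq_zero hp]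
    refine insert_subset (mem_ball_self (by positivity)) (ball_subset_ball' ?_)
    have : dist ((p.1, β) : ℝ × ℝ) p = β := by
      simp [Prod.dist_eq, hp, hβ.le]
    linarith
  · rw [eq_of_snd_ne_zero hp]
    exact inter_subset_left.trans (ball_subset_ball (by linarith))

lemma exists_mem_snd_pos (hp : 0 ≤ p.2) (hβ : 0 < β) : ∃ x ∈ NK p β, 0 < x.2 := by
  by_cases hp0 : p.2 = 0
  · exact ⟨(p.1, β), by rw [eq_of_snd_eq_zero hp0]; exact Or.inr (mem_ball_self hβ), hβ⟩
  · exact ⟨p, mem_self hp hβ, lt_of_le_of_ne hp (Ne.symm hp0)⟩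

lemma exists_subset_of_mem (hβ : 0 < β) (hx : x ∈ NK p β) :
    ∃ γ > 0, NK x γ ∩ {w | 0 ≤ w.2} ⊆ NK p β := by
  have hcases : x = p ∨ ∃ c ρ, x ∈ ball c ρ ∧ ball c ρ ∩ {w | 0 ≤ w.2} ⊆ NK p β := by
    by_cases hp : p.2 = 0
    · rw [eq_of_snd_eq_zero hp] at hx ⊢
      rcases hx with rfl | hx
      · exact Or.inl rfl
      · exact Or.inr ⟨_, _, hx, inter_subset_left.trans (subset_insert _ _)⟩
    · rw [eq_of_snd_ne_zero hp] at hx ⊢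
      exact Or.inr ⟨_, _, hx.1, subset_rfl⟩
  rcases hcases with rfl | ⟨c, ρ, hxc, hsub⟩
  · exact ⟨β, hβ, inter_subset_left⟩
  · have hγ : 0 < (ρ - dist x c) / 2 := by linarith [mem_ball.1 hxc]
    refine ⟨_, hγ, (inter_subset_inter_left _ ?_).trans hsub⟩
    exact (subset_ball hγ).trans (ball_subset_ball' (by linarith))

lemma mem_of_dist_lt (hr : 0 ≤ r) (hw : w ∈ NK p r) (hg : 0 < g.2)
    (hgw : dist g w < s - r) : g ∈ NK p s := by
  by_cases hp : p.2 = 0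
  · rw [eq_of_snd_eq_zero hp] at hw ⊢
    have hw' : |w.1 - p.1| ≤ r ∧ w.2 ≤ 2 * r := by
      rcases hw with rfl | hw
      · simp [hp, hr]
      · obtain ⟨h1, -, h3⟩ := mem_ball_tangent_iff.1 hw
        exact ⟨h1.le, h3.le⟩
    obtain ⟨h1, h2⟩ := Prod.mem_ball_iff_abs.1 (mem_ball.2 hgw)
    rw [abs_le] at hw'
    rw [abs_lt] at h1 h2
    refine Or.inr (mem_ball_tangent_iff.2 ⟨abs_lt.2 ⟨?_, ?_⟩, hg, ?_⟩) <;> linarith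
  · rw [eq_of_snd_ne_zero hp] at hw ⊢
    refine ⟨mem_ball.2 ?_, hg.le⟩
    calc dist g p ≤ dist g w + dist w p := dist_triangle _ _ _
      _ < s - r + r := add_lt_add hgw (mem_ball.1 hw.1)
      _ = s := by ring

end NK

def niemBasis : Set (Set NPoint) :=
  {s | ∃ (q : NPoint) (α : ℝ), 0 < α ∧ s = Subtype.val ⁻¹' NK q.val α}

lemma isTopologicalBasis_niemBasis :
    @TopologicalSpace.IsTopologicalBasis NPoint niem niemBasis := by
  let := niem
  refine ⟨?_, ?_, rfl⟩
  · rintro _ ⟨p₁, β₁, hβ₁, rfl⟩ _ ⟨p₂, β₂, hβ₂, rfl⟩ x ⟨hx₁, hx₂⟩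
    obtain ⟨γ₁, hγ₁, h₁⟩ := NK.exists_subset_of_mem hβ₁ hx₁
    obtain ⟨γ₂, hγ₂, h₂⟩ := NK.exists_subset_of_mem hβ₂ hx₂
    refine ⟨_, ⟨x, min γ₁ γ₂, lt_min hγ₁ hγ₂, rfl⟩, NK.mem_self x.2 (lt_min hγ₁ hγ₂),
      fun y hy => ⟨h₁ ⟨NK.mono (min_le_left _ _) hy, y.2⟩,
        h₂ ⟨NK.mono (min_le_right _ _) hy, y.2⟩⟩⟩
  · exact eq_univ_of_forall fun x => ⟨_, ⟨x, 1, one_pos, rfl⟩, NK.mem_self x.2 one_pos⟩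

lemma dense_snd_pos : @Dense NPoint niem {x | 0 < x.val.2} := by
  let := niem
  refine isTopologicalBasis_niemBasis.dense_iff.2 ?_
  rintro _ ⟨q, β, hβ, rfl⟩ -
  obtain ⟨x, hx, hx2⟩ := NK.exists_mem_snd_pos q.2 hβ
  exact ⟨⟨x, hx2.le⟩, hx, hx2⟩

theorem niemytzki_lemma3_general (F G : Set NPoint)
    (hG : G = @closure NPoint niem (@interior NPoint niem G))
    (ε α : ℝ) (hε : 0 < ε) (hε1 : ε < 1) (hα : 0 < α) :
    Disjoint
      (@closure NPoint niem
        (⋃ p ∈ {p ∈ F | (Subtype.val ⁻¹' NK p.val α) ∩ G = ∅},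
          Subtype.val ⁻¹' NK (p : NPoint).val (ε * α)))
      G := by
  let := niem
  refine disjoint_right.2 fun q hqG hqU => ?_
  set β := (α - ε * α) / 4
  have hβ : 0 < β := by
    have := mul_pos hα (sub_pos.2 hε1)
    simp only [β]
    linarith
  have hN : IsOpen (Subtype.val ⁻¹' NK q.val β) :=
    isTopologicalBasis_niemBasis.isOpen ⟨q, β, hβ, rfl⟩
  have hqN : q ∈ Subtype.val ⁻¹' NK q.val β := NK.mem_self q.2 hβ
  obtain ⟨g, hgN, hgG, hg⟩ := mem_closure_iff.1
    (dense_snd_pos.subset_closure_inter_of_eq_closure_interior hG hqG) _ hN hqN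
  obtain ⟨w, hwN, hwU⟩ := mem_closure_iff.1 hqU _ hN hqN
  simp only [mem_iUnion, mem_ofPred_eq, exists_prop] at hwU
  obtain ⟨p, ⟨-, hpG⟩, hwp⟩ := hwU
  have hgw : dist g.val w.val < α - ε * α :=
    calc dist g.val w.val ≤ dist g.val q.val + dist w.val q.val := dist_triangle_right _ _ _
      _ < 2 * β + 2 * β := add_lt_add (NK.subset_ball hβ hgN) (NK.subset_ball hβ hwN)
      _ = α - ε * α := by ring
  have hgp : g ∈ Subtype.val ⁻¹' NK p.val α := NK.mem_of_dist_lt (by positivity) hwp hg hgw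
  exact hpG.subset ⟨hgp, hgG⟩

/-- Lemma 3: if `F` and `G` are disjoint closed subsets of the Niemytzki plane with `G`
regular closed, and `0 < ε < 1`, `0 < α`, then the Niemytzki closure of
`⋃ {K(p, εα) : p ∈ F_α}` is disjoint from `G`. -/
theorem niemytzki_lemma3 (F G : Set NPoint)
    (hF : @IsClosed NPoint niem F) (hGc : @IsClosed NPoint niem G)
    (hG : G = @closure NPoint niem (@interior NPoint niem G))
    (hFG : Disjoint F G) (ε α : ℝ) (hε : 0 < ε) (hε1 : ε < 1) (hα : 0 < α) :
    Disjoint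
      (@closure NPoint niem
        (⋃ p ∈ {p ∈ F | (Subtype.val ⁻¹' NK p.val α) ∩ G = ∅},
          Subtype.val ⁻¹' NK (p : NPoint).val (ε * α)))
      G :=
  niemytzki_lemma3_general F G hG ε α hε hε1 hα
end

section
/- The Niemytzki plane is not normal, but it is an rc-space; hence the Niemytzki plane gives an example of an rc-space that is not normal. -/
/-!
`ℝ × ℝ` carries the sup metric, so the basic neighbourhoods `NK` of axis points are open squares
tangent to the axis.

The plane is separable, since the open upper half-plane is dense and carries its Euclidean
topology, while the axis is a closed discrete subset of cardinality `𝔠`; by Jones' lemma the plane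
is not normal.

For the rc property, let `F` and `G` be disjoint regular closed sets. Every point of `G` is a limit
of points of `G` off the axis, and an off-axis point outside the basic neighbourhood of size `r`
of `p` lies at distance at least `r` from `p`. So if the neighbourhood of size `r p` of `p ∈ F`
misses `G` and that of size `s q` of `q ∈ G` misses `F`, then `dist p q ≥ max (r p) (s q)`, and
the neighbourhoods of sizes `r p / 4` and `s q / 4`, which lie in balls of radii `r p / 2` and
`s q / 2`, are disjoint.
-/
open Set Metric

open Filter Topology Cardinal

namespace Niemytzki

noncomputable scoped instance : TopologicalSpace NPoint := { niem with }

lemma NK_of_snd_eq_zero {p : ℝ × ℝ} (h : p.2 = 0) (α : ℝ) :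
    NK p α = insert p (ball (p.1, α) α) := if_pos h

lemma NK_of_snd_ne_zero {p : ℝ × ℝ} (h : p.2 ≠ 0) (α : ℝ) :
    NK p α = ball p α ∩ {q | 0 ≤ q.2} := if_neg h

lemma NK_subset_ball (p : ℝ × ℝ) {α : ℝ} (hα : 0 < α) : NK p α ⊆ ball p (2 * α) := by
  by_cases hp : p.2 = 0
  · rw [NK_of_snd_eq_zero hp]
    refine insert_subset (mem_ball_self (by positivity)) (ball_subset_ball' ?_)
    have : dist (p.1, α) p = α := by
      simp [Prod.dist_eq, hp, abs_of_pos hα, hα.le]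
    linarith
  · rw [NK_of_snd_ne_zero hp]
    exact inter_subset_left.trans (ball_subset_ball (by linarith))

lemma snd_pos_of_mem_ball {x : ℝ × ℝ} {a α : ℝ} (h : x ∈ ball (a, α) α) : 0 < x.2 := by
  simp only [mem_ball, Prod.dist_eq, max_lt_iff, Real.dist_eq, abs_sub_lt_iff] at h
  linarith

lemma le_dist_of_notMem_NK {p w : ℝ × ℝ} {α : ℝ} (hw : 0 < w.2) (h : w ∉ NK p α) :
    α ≤ dist p w := by
  by_cases hp : p.2 = 0
  · rw [NK_of_snd_eq_zero hp, mem_insert_iff, not_or, mem_ball, not_lt] at h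
    have h1 := h.2
    rw [Prod.dist_eq, le_max_iff, Real.dist_eq, Real.dist_eq] at h1
    rw [dist_comm, Prod.dist_eq, le_max_iff, Real.dist_eq, Real.dist_eq, hp, sub_zero,
      abs_of_pos hw]
    rcases h1 with h1 | h1
    · exact Or.inl h1
    · right
      cases abs_cases (w.2 - α) <;> linarith
  · rw [NK_of_snd_ne_zero hp] at h
    exact not_lt.1 fun hlt => h ⟨by rwa [mem_ball, dist_comm], hw.le⟩

def nkNbhd (p : NPoint) (α : ℝ) : Set NPoint := Subtype.val ⁻¹' NK p.val α

lemma isOpen_nkNbhd (p : NPoint) {α : ℝ} (hα : 0 < α) : IsOpen (nkNbhd p α) :=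
  TopologicalSpace.GenerateOpen.basic _ ⟨p, α, hα, rfl⟩

lemma mem_nkNbhd_self (p : NPoint) {α : ℝ} (hα : 0 < α) : p ∈ nkNbhd p α := by
  by_cases hp : p.val.2 = 0
  · simp [nkNbhd, NK_of_snd_eq_zero hp]
  · simp [nkNbhd, NK_of_snd_ne_zero hp, hα, p.2]

lemma nkNbhd_mono (p : NPoint) {α β : ℝ} (h : α ≤ β) : nkNbhd p α ⊆ nkNbhd p β := by
  by_cases hp : p.val.2 = 0
  · simp only [nkNbhd, NK_of_snd_eq_zero hp]
    refine preimage_mono (insert_subset_insert (ball_subset_ball' ?_))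
    rw [Prod.dist_eq, dist_self, Real.dist_eq, abs_of_nonpos (by linarith),
      max_eq_right (by linarith)]
    linarith
  · simp only [nkNbhd, NK_of_snd_ne_zero hp]
    exact preimage_mono (inter_subset_inter_left _ (ball_subset_ball h))

lemma exists_nkNbhd_subset_nkNbhd {q w : NPoint} {α : ℝ} (hα : 0 < α)
    (hw : w ∈ nkNbhd q α) : ∃ β > 0, nkNbhd w β ⊆ nkNbhd q α := by
  by_cases hq : q.val.2 = 0
  · rw [nkNbhd, mem_preimage, NK_of_snd_eq_zero hq, mem_insert_iff] at hw
    rcases hw with hwq | hw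
    · exact ⟨α, hα, by rw [Subtype.ext hwq]⟩
    · refine ⟨α - dist w.val (q.val.1, α), sub_pos.2 hw, fun r hr => ?_⟩
      rw [nkNbhd, mem_preimage, NK_of_snd_ne_zero (snd_pos_of_mem_ball hw).ne'] at hr
      rw [nkNbhd, mem_preimage, NK_of_snd_eq_zero hq]
      exact Or.inr (ball_subset_ball' (by linarith) hr.1)
  · rw [nkNbhd, mem_preimage, NK_of_snd_ne_zero hq] at hw
    have hβ : 0 < (α - dist w.val q.val) / 2 := by linarith [mem_ball.1 hw.1]
    refine ⟨_, hβ, fun r hr => ?_⟩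
    rw [nkNbhd, mem_preimage, NK_of_snd_ne_zero hq]
    exact ⟨ball_subset_ball' (by linarith) (NK_subset_ball _ hβ hr), r.2⟩

lemma exists_nkNbhd_subset {U : Set NPoint} (hU : IsOpen U) {p : NPoint} (hp : p ∈ U) :
    ∃ α > 0, nkNbhd p α ⊆ U := by
  induction hU generalizing p with
  | basic s hs =>
    obtain ⟨q, α, hα, rfl⟩ := hs
    exact exists_nkNbhd_subset_nkNbhd hα hp
  | univ => exact ⟨1, one_pos, subset_univ _⟩
  | inter s t _ _ ihs iht =>
    obtain ⟨α, hα, hs⟩ := ihs hp.1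
    obtain ⟨β, hβ, ht⟩ := iht hp.2
    exact ⟨min α β, lt_min hα hβ, subset_inter ((nkNbhd_mono p (min_le_left α β)).trans hs)
      ((nkNbhd_mono p (min_le_right α β)).trans ht)⟩
  | sUnion S _ ih =>
    obtain ⟨s, hsS, hps⟩ := hp
    obtain ⟨α, hα, hs⟩ := ih s hsS hps
    exact ⟨α, hα, hs.trans (subset_sUnion_of_mem hsS)⟩

lemma nhds_basis_nkNbhd (p : NPoint) : (𝓝 p).HasBasis (fun α => 0 < α) (nkNbhd p) := by
  refine ⟨fun t => ⟨fun ht => ?_, fun ⟨α, hα, hαt⟩ => ?_⟩⟩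
  · obtain ⟨U, hUt, hU, hpU⟩ := mem_nhds_iff.1 ht
    obtain ⟨α, hα, hαU⟩ := exists_nkNbhd_subset hU hpU
    exact ⟨α, hα, hαU.trans hUt⟩
  · exact mem_of_superset ((isOpen_nkNbhd p hα).mem_nhds (mem_nkNbhd_self p hα)) hαt

lemma continuous_val : Continuous (Subtype.val : NPoint → ℝ × ℝ) :=
  continuous_iff_continuousAt.2 fun p => ((nhds_basis_nkNbhd p).tendsto_iff nhds_basis_ball).2
    fun ε hε => ⟨ε / 2, half_pos hε, fun w hw => by
      simpa [mul_div_cancel₀] using NK_subset_ball p.val (half_pos hε) hw⟩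

lemma exists_snd_pos_mem_nkNbhd (p : NPoint) {α : ℝ} (hα : 0 < α) :
    ∃ w ∈ nkNbhd p α, 0 < w.val.2 := by
  by_cases hp : p.val.2 = 0
  · refine ⟨⟨(p.val.1, α), hα.le⟩, ?_, hα⟩
    simp [nkNbhd, NK_of_snd_eq_zero hp, hα]
  · exact ⟨p, mem_nkNbhd_self p hα, p.2.lt_of_ne' hp⟩

lemma dense_snd_pos : Dense {p : NPoint | 0 < p.val.2} := by
  refine dense_iff_inter_open.2 fun U hU ⟨p, hp⟩ => ?_
  obtain ⟨α, hα, hαU⟩ := exists_nkNbhd_subset hU hp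
  obtain ⟨w, hw, hw2⟩ := exists_snd_pos_mem_nkNbhd p hα
  exact ⟨w, hαU hw, hw2⟩

lemma isOpen_NK_inter_snd_pos (p : ℝ × ℝ) (α : ℝ) : IsOpen (NK p α ∩ {q | 0 < q.2}) := by
  have hP : IsOpen {q : ℝ × ℝ | 0 < q.2} := isOpen_lt continuous_const continuous_snd
  by_cases hp : p.2 = 0
  · rw [NK_of_snd_eq_zero hp, insert_inter_of_notMem (by simp [hp])]
    exact isOpen_ball.inter hP
  · have hPH : {q : ℝ × ℝ | 0 < q.2} ⊆ {q | 0 ≤ q.2} := fun q (hq : 0 < q.2) => hq.le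
    rw [NK_of_snd_ne_zero hp, inter_assoc, inter_eq_right.2 hPH]
    exact isOpen_ball.inter hP

instance : TopologicalSpace.SeparableSpace NPoint := by
  let ι : {p : ℝ × ℝ // 0 < p.2} → NPoint := fun p => ⟨p.val, p.2.le⟩
  have hι : DenseRange ι := dense_snd_pos.mono fun p hp => ⟨⟨p.val, hp⟩, rfl⟩
  refine hι.separableSpace (continuous_generateFrom_iff.2 ?_)
  rintro _ ⟨q, α, -, rfl⟩
  convert (isOpen_NK_inter_snd_pos q.val α).preimage continuous_subtype_val using 1
  ext p
  simp [ι, p.2]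

def axis : Set NPoint := {p | p.val.2 = 0}

lemma isClosed_axis : IsClosed axis :=
  isClosed_eq (continuous_snd.comp continuous_val) continuous_const

instance : DiscreteTopology axis := by
  refine discreteTopology_subtype_iff'.2 fun p hp => ⟨nkNbhd p 1, isOpen_nkNbhd p one_pos, ?_⟩
  refine subset_antisymm (fun w ⟨hw, hw2⟩ => ?_)
    (singleton_subset_iff.2 ⟨mem_nkNbhd_self p one_pos, hp⟩)
  rw [nkNbhd, mem_preimage, NK_of_snd_eq_zero (show p.val.2 = 0 from hp), mem_insert_iff] at hw
  rcases hw with hw | hw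
  · exact Subtype.ext hw
  · exact absurd (show w.val.2 = 0 from hw2) (snd_pos_of_mem_ball hw).ne'

lemma continuum_le_mk_axis : 𝔠 ≤ #axis := by
  rw [← mk_real]
  exact mk_le_of_injective (f := fun x : ℝ => (⟨⟨(x, 0), le_rfl⟩, rfl⟩ : axis))
    fun x y h => by simpa using congrArg (fun a : axis => a.val.val.1) h

theorem not_normalSpace : ¬ NormalSpace NPoint :=
  isClosed_axis.not_normal_of_continuum_le_mk continuum_le_mk_axis

lemma le_dist_of_disjoint_nkNbhd {G : Set NPoint} (hG : G = closure (interior G)) {p q : NPoint}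
    (hq : q ∈ G) {α : ℝ} (h : Disjoint (nkNbhd p α) G) : α ≤ dist p.val q.val := by
  have hq' : q ∈ closure (interior G ∩ {w | 0 < w.val.2}) :=
    closure_minimal (dense_snd_pos.open_subset_closure_inter isOpen_interior) isClosed_closure
      (hG ▸ hq)
  refine closure_minimal ?_
    (isClosed_le continuous_const (continuous_const.dist continuous_val)) hq'
  rintro w ⟨hwG, hw2⟩
  exact le_dist_of_notMem_NK hw2 fun hw => h.notMem_of_mem_left hw (interior_subset hwG)

lemma exists_nkNbhd_disjoint {A B : Set NPoint} (hB : IsClosed B) (hAB : Disjoint A B) :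
    ∃ r : NPoint → ℝ, ∀ p ∈ A, 0 < r p ∧ Disjoint (nkNbhd p (r p)) B := by
  choose! r hr hrB using fun p (hp : p ∈ Bᶜ) => exists_nkNbhd_subset hB.isOpen_compl hp
  exact ⟨r, fun p hp => ⟨hr p (hAB.notMem_of_mem_left hp),
    subset_compl_iff_disjoint_right.1 (hrB p (hAB.notMem_of_mem_left hp))⟩⟩

theorem separatedNhds_of_regularClosed {F G : Set NPoint} (hF : F = closure (interior F))
    (hG : G = closure (interior G)) (hFG : Disjoint F G) : SeparatedNhds F G := by
  obtain ⟨r, hr⟩ := exists_nkNbhd_disjoint (hG ▸ isClosed_closure) hFG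
  obtain ⟨s, hs⟩ := exists_nkNbhd_disjoint (hF ▸ isClosed_closure) hFG.symm
  refine ⟨⋃ p ∈ F, nkNbhd p (r p / 4), ⋃ q ∈ G, nkNbhd q (s q / 4),
    isOpen_biUnion fun p hp => isOpen_nkNbhd p (by linarith [(hr p hp).1]),
    isOpen_biUnion fun q hq => isOpen_nkNbhd q (by linarith [(hs q hq).1]),
    fun p hp => mem_biUnion hp (mem_nkNbhd_self p (by linarith [(hr p hp).1])),
    fun q hq => mem_biUnion hq (mem_nkNbhd_self q (by linarith [(hs q hq).1])), ?_⟩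
  refine disjoint_iUnion₂_left.2 fun p hp => disjoint_iUnion₂_right.2 fun q hq =>
    disjoint_left.2 fun w hwp hwq => ?_
  obtain ⟨hr0, hrG⟩ := hr p hp
  obtain ⟨hs0, hsF⟩ := hs q hq
  have hpq : r p ≤ dist p.val q.val := le_dist_of_disjoint_nkNbhd hG hq hrG
  have hqp : s q ≤ dist q.val p.val := le_dist_of_disjoint_nkNbhd hF hp hsF
  have hwp' := mem_ball.1 (NK_subset_ball p.val (by linarith) hwp)
  have hwq' := mem_ball.1 (NK_subset_ball q.val (by linarith) hwq)
  linarith [dist_triangle_left p.val q.val w.val, dist_comm p.val q.val]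

end Niemytzki

/-- The Niemytzki plane is not normal, but it is an rc-space. -/
theorem niemytzki_not_normal_but_rc :
    ¬ @NormalSpace NPoint niem ∧
    (∀ F G : Set NPoint,
      F = @closure NPoint niem (@interior NPoint niem F) →
      G = @closure NPoint niem (@interior NPoint niem G) →
      Disjoint F G →
      ∃ U V : Set NPoint, @IsOpen NPoint niem U ∧ @IsOpen NPoint niem V ∧
        F ⊆ U ∧ G ⊆ V ∧ Disjoint U V) :=
  ⟨Niemytzki.not_normalSpace, fun _ _ => Niemytzki.separatedNhds_of_regularClosed⟩
end

section
/- In the Sorgenfrey plane, if a sequence of points x_k converges to a point x in the Euclidean topology of ℝ², then for any n > 0, the Euclidean interior of the box [x, x + 1/n) × [x, x + 1/n) is contained in the union over k of the boxes [x_k, x_k + 1/n)². -/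
open Set

/-- The basic half-open box of side `1/n` with lower-left corner `x`. -/
noncomputable def SBox (x : ℝ × ℝ) (n : ℕ) : Set (ℝ × ℝ) :=
  Set.Ico x.1 (x.1 + 1 / n) ×ˢ Set.Ico x.2 (x.2 + 1 / n)

open Filter Topology

/- The corners `b` with `y ∈ Ioo b (b + r)` form the open interval `Ioo (y - r) y`, so every
corner close enough to `a` still has `y` in its half-open interval. -/
theorem eventually_mem_Ico_of_mem_Ioo {α : Type*} [AddCommGroup α] [LinearOrder α]
    [IsOrderedAddMonoid α] [TopologicalSpace α] [OrderTopology α] {a r y : α}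
    (hy : y ∈ Ioo a (a + r)) : ∀ᶠ b in 𝓝 a, y ∈ Ico b (b + r) := by
  filter_upwards [Ioo_mem_nhds (sub_lt_iff_lt_add.2 hy.2) hy.1] with b hb
  exact ⟨hb.2.le, sub_lt_iff_lt_add.1 hb.1⟩

theorem eventually_mem_SBox_of_mem_interior {p y : ℝ × ℝ} {n : ℕ}
    (hy : y ∈ interior (SBox p n)) : ∀ᶠ q in 𝓝 p, y ∈ SBox q n := by
  rw [SBox, interior_prod_eq, interior_Ico, interior_Ico] at hy
  rw [nhds_prod_eq]
  exact (eventually_mem_Ico_of_mem_Ioo hy.1).prod_mk (eventually_mem_Ico_of_mem_Ioo hy.2)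

theorem sorgenfrey_fact_general (x : ℕ → ℝ × ℝ) (x₀ : ℝ × ℝ)
    (hconv : Filter.Tendsto x Filter.atTop (nhds x₀)) (n : ℕ) :
    interior (SBox x₀ n) ⊆ ⋃ k, SBox (x k) n := fun _ hy =>
  mem_iUnion.2 (hconv.eventually (eventually_mem_SBox_of_mem_interior hy)).exists

/-- If a sequence `xₖ` converges to `x` in the Euclidean topology of `ℝ²`, then the
Euclidean interior of the box `P(x,n)` is contained in `⋃ₖ P(xₖ,n)`. -/
theorem sorgenfrey_fact (x : ℕ → ℝ × ℝ) (x₀ : ℝ × ℝ)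
    (hconv : Filter.Tendsto x Filter.atTop (nhds x₀)) (n : ℕ) (hn : 0 < n) :
    interior (SBox x₀ n) ⊆ ⋃ k, SBox (x k) n :=
  sorgenfrey_fact_general x x₀ hconv n
end

section
/- Let F and G be disjoint closed subsets of the Sorgenfrey plane with G regular closed (in the Sorgenfrey topology). Then for each n > 0, the Euclidean closure of F_{G,n} = {x ∈ F : P(x, n) ∩ G = ∅} is disjoint from G, where P(x, n) = [x₁, x₁+1/n) × [x₂, x₂+1/n). -/
open Set

/-- The Sorgenfrey (lower limit) topology on the real line. -/
def sorgLine : TopologicalSpace ℝ :=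
  TopologicalSpace.generateFrom {s : Set ℝ | ∃ a b : ℝ, s = Set.Ico a b}

/-- The Sorgenfrey plane: the product of two Sorgenfrey lines. -/
def sorgPlane : TopologicalSpace (ℝ × ℝ) :=
  @instTopologicalSpaceProd ℝ ℝ sorgLine sorgLine

open Filter Topology TopologicalSpace

/-! Since `G` is the Sorgenfrey closure of its Sorgenfrey interior, arbitrarily close to any
`y ∈ G` there is an interior point `z ≥ y`, hence a whole quadrant `[z, z + δ)²` inside `G`, hence
a point `w ∈ G` with `y < w < y + 1/n` in both coordinates. The `x` with `x < w < x + 1/n` form a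
Euclidean neighbourhood of `y`, and each of them has `w ∈ P(x, n) ∩ G`, so none lies in
`F_{G,n}`. -/

lemma nhds_sorgLine (x : ℝ) : @nhds ℝ sorgLine x = 𝓝[≥] x := by
  refine le_antisymm ((nhdsGE_basis_Ico x).ge_iff.2 fun u hxu => ?_) ?_
  · exact @IsOpen.mem_nhds ℝ sorgLine _ _ (isOpen_generateFrom_of_mem ⟨x, u, rfl⟩) ⟨le_rfl, hxu⟩
  · change 𝓝[≥] x ≤ @nhds ℝ (generateFrom _) x
    rw [nhds_generateFrom]
    exact le_iInf₂ fun _ ⟨hx, _, _, hs⟩ => le_principal_iff.2 (hs ▸ Ico_mem_nhdsGE_of_mem (hs ▸ hx))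

lemma nhds_sorgPlane (z : ℝ × ℝ) : @nhds (ℝ × ℝ) sorgPlane z = 𝓝[≥] z.1 ×ˢ 𝓝[≥] z.2 := by
  rw [← nhds_sorgLine, ← nhds_sorgLine]
  exact @nhds_prod_eq ℝ ℝ sorgLine sorgLine z.1 z.2

lemma isOpen_sorgPlane_Ico_prod_Ico (a b c d : ℝ) : IsOpen[sorgPlane] (Ico a b ×ˢ Ico c d) :=
  @IsOpen.prod ℝ ℝ sorgLine sorgLine _ _ (isOpen_generateFrom_of_mem ⟨a, b, rfl⟩)
    (isOpen_generateFrom_of_mem ⟨c, d, rfl⟩)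

lemma exists_mem_Ioo_prod_Ioo_of_mem_closure_interior {G : Set (ℝ × ℝ)} {y : ℝ × ℝ}
    (hy : y ∈ closure[sorgPlane] (@interior _ sorgPlane G)) {a b : ℝ} (ha : y.1 < a)
    (hb : y.2 < b) :
    ∃ w ∈ G, w ∈ Ioo y.1 a ×ˢ Ioo y.2 b := by
  obtain ⟨z, ⟨⟨hz₁, hz₂⟩, hzG⟩⟩ := (@mem_closure_iff _ sorgPlane _ _).1 hy _
    (isOpen_sorgPlane_Ico_prod_Ico y.1 a y.2 b) ⟨⟨le_rfl, ha⟩, le_rfl, hb⟩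
  have hle : 𝓝[>] z.1 ×ˢ 𝓝[>] z.2 ≤ @nhds _ sorgPlane z := by
    rw [nhds_sorgPlane]
    exact prod_mono (nhdsWithin_mono _ Ioi_subset_Ici_self) (nhdsWithin_mono _ Ioi_subset_Ici_self)
  have hV : Ico y.1 a ×ˢ Ico y.2 b ∩ @interior _ sorgPlane G ∈ 𝓝[>] z.1 ×ˢ 𝓝[>] z.2 :=
    hle <| @IsOpen.mem_nhds _ sorgPlane _ _ (@IsOpen.inter _ sorgPlane _ _
      (isOpen_sorgPlane_Ico_prod_Ico _ _ _ _) (@isOpen_interior _ sorgPlane G)) ⟨⟨hz₁, hz₂⟩, hzG⟩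
  obtain ⟨w, ⟨⟨hw₁, hw₂⟩, hwG⟩, hzw₁, hzw₂⟩ :=
    Filter.nonempty_of_mem (inter_mem hV (prod_mem_prod self_mem_nhdsWithin self_mem_nhdsWithin))
  exact ⟨w, @interior_subset _ sorgPlane G w hwG, ⟨hz₁.1.trans_lt hzw₁, hw₁.2⟩,
    hz₂.1.trans_lt hzw₂, hw₂.2⟩

lemma eventually_mem_SBox {y w : ℝ × ℝ} {n : ℕ} (h₁ : w.1 ∈ Ioo y.1 (y.1 + 1 / n))
    (h₂ : w.2 ∈ Ioo y.2 (y.2 + 1 / n)) : ∀ᶠ x in 𝓝 y, w ∈ SBox x n := by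
  have hfst := continuous_fst.tendsto y
  have hsnd := continuous_snd.tendsto y
  have h₁' : w.1 - 1 / n < y.1 := by linarith [h₁.2]
  have h₂' : w.2 - 1 / n < y.2 := by linarith [h₂.2]
  filter_upwards [hfst.eventually (gt_mem_nhds h₁.1), hfst.eventually (lt_mem_nhds h₁'),
    hsnd.eventually (gt_mem_nhds h₂.1), hsnd.eventually (lt_mem_nhds h₂')]
    with x hx₁ hx₁' hx₂ hx₂'
  exact ⟨⟨hx₁.le, by linarith⟩, hx₂.le, by linarith⟩

theorem sorgenfrey_lemma_general (F G : Set (ℝ × ℝ))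
    (hG : G = @closure (ℝ × ℝ) sorgPlane (@interior (ℝ × ℝ) sorgPlane G))
    (n : ℕ) (hn : 0 < n) :
    Disjoint (closure {x ∈ F | SBox x n ∩ G = ∅}) G := by
  refine disjoint_right.2 fun y hyG hy => ?_
  have hside : (0 : ℝ) < 1 / n := by positivity
  obtain ⟨w, hwG, hw₁, hw₂⟩ := exists_mem_Ioo_prod_Ioo_of_mem_closure_interior (hG ▸ hyG)
    (lt_add_of_pos_right y.1 hside) (lt_add_of_pos_right y.2 hside)
  obtain ⟨x, ⟨-, hxG⟩, hwx⟩ :=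
    ((mem_closure_iff_frequently.1 hy).and_eventually (eventually_mem_SBox hw₁ hw₂)).exists
  exact (hxG ▸ ⟨hwx, hwG⟩ : w ∈ (∅ : Set (ℝ × ℝ)))

/-- Lemma 6 (planar case): if `F` and `G` are disjoint closed subsets of the Sorgenfrey
plane with `G` regular closed, then for each `n > 0` the Euclidean closure of
`F_{G,n} = {x ∈ F : P(x,n) ∩ G = ∅}` is disjoint from `G`. -/
theorem sorgenfrey_lemma (F G : Set (ℝ × ℝ))
    (hF : @IsClosed (ℝ × ℝ) sorgPlane F) (hGc : @IsClosed (ℝ × ℝ) sorgPlane G)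
    (hG : G = @closure (ℝ × ℝ) sorgPlane (@interior (ℝ × ℝ) sorgPlane G))
    (hFG : Disjoint F G) (n : ℕ) (hn : 0 < n) :
    Disjoint (closure {x ∈ F | SBox x n ∩ G = ∅}) G :=
  sorgenfrey_lemma_general F G hG n hn
end

section
/- The Sorgenfrey plane is an rc-space: any two disjoint regular closed subsets of ℝ² with the Sorgenfrey product topology have disjoint open neighbourhoods. -/
open Set

open TopologicalSpace

/-! Let `U` be the set of points `z` such that some half-open square `[z, z + ε)²` misses `G` but
meets `int F`, and `V` the same with `F` and `G` exchanged. Squares with a common corner are nested,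
so a point of `U ∩ V` would have a square missing `F` inside one meeting `int F`, or vice versa.
Every point of `F` has a square missing the closed set `G`, and that square meets `int F` because
`F ⊆ closure (int F)`. Finally `U` is open: if `[z, z + ε)²` meets `int F` at `w` and
`[w, w + η)² ⊆ int F`, then for every `z'` in a small square `[z, z + δ)²` the square
`[z', z' + ε - δ)² ⊆ [z, z + ε)²` contains `w ⊔ z' ∈ [w, w + η)²`. -/

def sorgBox (z : ℝ × ℝ) (ε : ℝ) : Set (ℝ × ℝ) :=
  Ico z.1 (z.1 + ε) ×ˢ Ico z.2 (z.2 + ε)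

lemma sorgBox_mono (z : ℝ × ℝ) : Monotone (sorgBox z) := fun _ _ h =>
  prod_mono (Ico_subset_Ico_right (by linarith)) (Ico_subset_Ico_right (by linarith))

lemma sorgLine_isTopologicalBasis :
    @IsTopologicalBasis ℝ sorgLine {s | ∃ a b : ℝ, s = Ico a b} := by
  refine @IsTopologicalBasis.mk ℝ sorgLine _ ?_
    (eq_univ_of_forall fun x => ⟨Ico x (x + 1), ⟨x, x + 1, rfl⟩, ?_⟩) rfl
  · rintro _ ⟨a, b, rfl⟩ _ ⟨c, d, rfl⟩ x hx
    exact ⟨_, ⟨max a c, min b d, Ico_inter_Ico⟩, hx, subset_rfl⟩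
  · exact left_mem_Ico.2 (by linarith)

lemma sorgLine_nhds_hasBasis (x : ℝ) :
    (@nhds ℝ sorgLine x).HasBasis (0 < ·) (fun ε => Ico x (x + ε)) := by
  refine (@IsTopologicalBasis.nhds_hasBasis ℝ sorgLine _ sorgLine_isTopologicalBasis x).to_hasBasis
    ?_ fun ε hε => ⟨Ico x (x + ε), ⟨⟨x, x + ε, rfl⟩, left_mem_Ico.2 (by linarith)⟩, subset_rfl⟩
  rintro _ ⟨⟨a, b, rfl⟩, hxa, hxb⟩
  exact ⟨b - x, by linarith, Ico_subset_Ico hxa (by linarith)⟩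

lemma sorgPlane_nhds_hasBasis (z : ℝ × ℝ) :
    (@nhds _ sorgPlane z).HasBasis (0 < ·) (sorgBox z) := by
  have hmono (x : ℝ) : MonotoneOn (fun ε => Ico x (x + ε)) {ε | 0 < ε} :=
    fun _ _ _ _ h => Ico_subset_Ico_right (by linarith)
  obtain ⟨x, y⟩ := z
  rw [sorgPlane, @nhds_prod_eq ℝ ℝ sorgLine sorgLine]
  exact (sorgLine_nhds_hasBasis x).prod_same_index_mono (sorgLine_nhds_hasBasis y)
    (hmono x) (hmono y)

lemma sorgPlane_isOpen_iff {s : Set (ℝ × ℝ)} :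
    @IsOpen _ sorgPlane s ↔ ∀ z ∈ s, ∃ ε > 0, sorgBox z ε ⊆ s := by
  simp only [@isOpen_iff_mem_nhds _ sorgPlane, (sorgPlane_nhds_hasBasis _).mem_iff]

lemma mem_sorgPlane_closure_iff {s : Set (ℝ × ℝ)} {z : ℝ × ℝ} :
    z ∈ @closure _ sorgPlane s ↔ ∀ ε > 0, (sorgBox z ε ∩ s).Nonempty :=
  @mem_closure_iff_nhds_basis' _ sorgPlane _ _ _ _ _ (sorgPlane_nhds_hasBasis z)

lemma Ico_shift_subset_and_max_mem {z w z' δ ε η : ℝ} (hzw : z ≤ w) (hδη : δ ≤ η)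
    (hδ : δ < z + ε - w) (hz' : z' ∈ Ico z (z + δ)) :
    Ico z' (z' + (ε - δ)) ⊆ Ico z (z + ε) ∧ max w z' ∈ Ico w (w + η) ∩ Ico z' (z' + (ε - δ)) := by
  obtain ⟨hzz', hz'δ⟩ := hz'
  exact ⟨Ico_subset_Ico hzz' (by linarith), ⟨le_max_left _ _, max_lt (by linarith) (by linarith)⟩,
    ⟨le_max_right _ _, max_lt (by linarith) (by linarith)⟩⟩

lemma exists_sorgBox_shift {z w : ℝ × ℝ} {ε η : ℝ} (hw : w ∈ sorgBox z ε) (hη : 0 < η) :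
    ∃ δ, 0 < δ ∧ δ < ε ∧ ∀ z' ∈ sorgBox z δ,
      sorgBox z' (ε - δ) ⊆ sorgBox z ε ∧ (sorgBox w η ∩ sorgBox z' (ε - δ)).Nonempty := by
  obtain ⟨⟨hw₁, hw₁'⟩, hw₂, hw₂'⟩ := hw
  set δ := min η (min (z.1 + ε - w.1) (z.2 + ε - w.2) / 2)
  have hδη : δ ≤ η := min_le_left _ _
  have hδm : δ ≤ min (z.1 + ε - w.1) (z.2 + ε - w.2) / 2 := min_le_right _ _
  have hδ₁ : δ < z.1 + ε - w.1 := by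
    have := min_le_left (z.1 + ε - w.1) (z.2 + ε - w.2); linarith
  have hδ₂ : δ < z.2 + ε - w.2 := by
    have := min_le_right (z.1 + ε - w.1) (z.2 + ε - w.2); linarith
  refine ⟨δ, lt_min hη (half_pos (lt_min (by linarith) (by linarith))), by linarith, ?_⟩
  rintro z' ⟨hz'₁, hz'₂⟩
  obtain ⟨hsub₁, hmem₁, hmem₁'⟩ := Ico_shift_subset_and_max_mem hw₁ hδη hδ₁ hz'₁
  obtain ⟨hsub₂, hmem₂, hmem₂'⟩ := Ico_shift_subset_and_max_mem hw₂ hδη hδ₂ hz'₂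
  exact ⟨prod_mono hsub₁ hsub₂, (max w.1 z'.1, max w.2 z'.2), ⟨hmem₁, hmem₂⟩, hmem₁', hmem₂'⟩

def sorgSep (O G : Set (ℝ × ℝ)) : Set (ℝ × ℝ) :=
  {z | ∃ ε > 0, Disjoint (sorgBox z ε) G ∧ (sorgBox z ε ∩ O).Nonempty}

lemma isOpen_sorgSep {O : Set (ℝ × ℝ)} (hO : @IsOpen _ sorgPlane O) (G : Set (ℝ × ℝ)) :
    @IsOpen _ sorgPlane (sorgSep O G) := by
  rw [sorgPlane_isOpen_iff]
  rintro z ⟨ε, -, hG, w, hwz, hwO⟩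
  obtain ⟨η, hη, hηO⟩ := sorgPlane_isOpen_iff.1 hO w hwO
  obtain ⟨δ, hδ, hδε, hshift⟩ := exists_sorgBox_shift hwz hη
  refine ⟨δ, hδ, fun z' hz' => ?_⟩
  obtain ⟨hsub, p, hpw, hpz'⟩ := hshift z' hz'
  exact ⟨ε - δ, by linarith, hG.mono_left hsub, p, hpz', hηO hpw⟩

lemma subset_sorgSep {F G O : Set (ℝ × ℝ)} (hFO : F ⊆ @closure _ sorgPlane O)
    (hG : @IsClosed _ sorgPlane G) (hFG : Disjoint F G) : F ⊆ sorgSep O G := by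
  intro x hx
  obtain ⟨ε, hε, hxG⟩ := sorgPlane_isOpen_iff.1 hG.isOpen_compl x (hFG.notMem_of_mem_left hx)
  exact ⟨ε, hε, subset_compl_iff_disjoint_right.1 hxG,
    mem_sorgPlane_closure_iff.1 (hFO hx) ε hε⟩

lemma disjoint_sorgSep {O F Q G : Set (ℝ × ℝ)} (hOF : O ⊆ F) (hQG : Q ⊆ G) :
    Disjoint (sorgSep O G) (sorgSep Q F) := by
  rw [disjoint_left]
  rintro z ⟨ε, -, hεG, p, hp, hpO⟩ ⟨γ, -, hγF, q, hq, hqQ⟩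
  rcases le_total ε γ with h | h
  · exact hγF.notMem_of_mem_left (sorgBox_mono z h hp) (hOF hpO)
  · exact hεG.notMem_of_mem_left (sorgBox_mono z h hq) (hQG hqQ)

/-- The Sorgenfrey plane is an rc-space: any two disjoint regular closed subsets
have disjoint open neighbourhoods. -/
theorem sorgenfrey_plane_rc (F G : Set (ℝ × ℝ))
    (hF : F = @closure (ℝ × ℝ) sorgPlane (@interior (ℝ × ℝ) sorgPlane F))
    (hG : G = @closure (ℝ × ℝ) sorgPlane (@interior (ℝ × ℝ) sorgPlane G))
    (hFG : Disjoint F G) :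
    ∃ U V : Set (ℝ × ℝ), @IsOpen (ℝ × ℝ) sorgPlane U ∧ @IsOpen (ℝ × ℝ) sorgPlane V ∧
      F ⊆ U ∧ G ⊆ V ∧ Disjoint U V := by
  have hFc : @IsClosed _ sorgPlane F := hF ▸ @isClosed_closure _ sorgPlane _
  have hGc : @IsClosed _ sorgPlane G := hG ▸ @isClosed_closure _ sorgPlane _
  exact ⟨sorgSep (@interior _ sorgPlane F) G, sorgSep (@interior _ sorgPlane G) F,
    isOpen_sorgSep (@isOpen_interior _ sorgPlane F) G,
    isOpen_sorgSep (@isOpen_interior _ sorgPlane G) F,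
    subset_sorgSep hF.subset hGc hFG, subset_sorgSep hG.subset hFc hFG.symm,
    disjoint_sorgSep (@interior_subset _ sorgPlane F) (@interior_subset _ sorgPlane G)⟩
end
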